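/- Let g : ℝ → ℝ be continuous, non-decreasing and everywhere positive, let C > 0, q ≥ 0, θ > 0, τ > θq be constants, let R ∈ (0,∞], and let v : [0,R) → ℝ solve the Cauchy problem (★). Then for every r ∈ (0,R), v'(r) > 0, v''(r) exists, and v satisfies the ordinary differential equation v''(r) · (v'(r))^{θ−1} + (q/r) · (v'(r))^{θ} = (C^θ/θ) · r^{τ − qθ − 1} · g(v(r)). -/

import Mathlib

/-!
Write `F(r) = ∫₀ʳ s^{τ-1} g(v(s)) ds`, so that `v' = C r^{-q} F^{1/θ}` on `(0, R)`. As
`τ > θq ≥ 0`, the weight `s^{τ-1}` is integrable at `0`, so `F` is positive and, by the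
fundamental theorem of calculus, differentiable with `F' = r^{τ-1} g(v)`. Hence `v'` is
differentiable with logarithmic derivative `v''/v' = -q/r + F'/(θF)`, and multiplying by
`(v')^θ = C^θ r^{-qθ} F` gives the equation.
-/

open Real MeasureTheory Set Filter Topology ENNReal

/-- The right-hand side of the Cauchy problem (★):
`C · r^{-q} · (∫_0^r s^{τ-1} g(v(s)) ds)^{1/θ}`. -/
noncomputable def cauchyRHS (C q τ θ : ℝ) (g v : ℝ → ℝ) (r : ℝ) : ℝ :=
  C * r ^ (-q) * (∫ s in (0:ℝ)..r, s ^ (τ - 1) * g (v s)) ^ (1 / θ)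

/-- `v : ℝ → ℝ` solves the Cauchy problem (★) on `[0, R)` (with `R ∈ (0, ∞]` an
extended nonnegative real): `v` is continuous on `[0, R)`, `v 0 = a`, and at every
`r ∈ (0, R)` the derivative of `v` exists and is given by `cauchyRHS`. -/
def SolvesCauchy (C q τ θ a : ℝ) (g : ℝ → ℝ) (R : ℝ≥0∞) (v : ℝ → ℝ) : Prop :=
  ContinuousOn v {r : ℝ | 0 ≤ r ∧ ENNReal.ofReal r < R} ∧
  v 0 = a ∧
  ∀ r : ℝ, 0 < r → ENNReal.ofReal r < R → HasDerivAt v (cauchyRHS C q τ θ g v r) r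

/-- The Keller–Osserman condition:
`∫_b^∞ (∫_0^t g(s) ds)^{-1/(θ+1)} dt = +∞` for every `b > 0`. -/
def KellerOsserman (θ : ℝ) (g : ℝ → ℝ) : Prop :=
  ∀ b : ℝ, 0 < b →
    ∫⁻ t in Set.Ioi b, ENNReal.ofReal ((∫ s in (0:ℝ)..t, g s) ^ (-(1 / (θ + 1)))) = ⊤

section WeightedIntegral

variable {h : ℝ → ℝ} {τ : ℝ}

lemma intervalIntegrable_rpow_sub_one_mul (hτ : 0 < τ) {x : ℝ}
    (hh : ContinuousOn h (uIcc 0 x)) :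
    IntervalIntegrable (fun s => s ^ (τ - 1) * h s) volume 0 x :=
  (intervalIntegral.intervalIntegrable_rpow' (by linarith)).mul_continuousOn hh

lemma integral_rpow_sub_one_mul_pos (hτ : 0 < τ) {x : ℝ} (hx : 0 < x)
    (hh : ContinuousOn h (Icc 0 x)) (hpos : ∀ s ∈ Ioc 0 x, 0 < h s) :
    0 < ∫ s in (0 : ℝ)..x, s ^ (τ - 1) * h s := by
  refine intervalIntegral.intervalIntegral_pos_of_pos_on
    (intervalIntegrable_rpow_sub_one_mul hτ (by rwa [uIcc_of_le hx.le])) ?_ hx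
  intro s hs
  exact mul_pos (rpow_pos_of_pos hs.1 _) (hpos s (Ioo_subset_Ioc_self hs))

lemma hasDerivAt_integral_rpow_sub_one_mul (hτ : 0 < τ) {r : ℝ} (hr : 0 < r) {T : Set ℝ}
    (hT : T ∈ 𝓝 r) (hIcc : Icc 0 r ⊆ T) (hh : ContinuousOn h T) :
    HasDerivAt (fun x => ∫ s in (0 : ℝ)..x, s ^ (τ - 1) * h s) (r ^ (τ - 1) * h r) r := by
  have hcont : ContinuousOn (fun s => s ^ (τ - 1) * h s) (T ∩ Ioi 0) := fun s hs =>
    ((continuousAt_rpow_const s _ (Or.inl hs.2.ne')).continuousWithinAt).mul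
      (hh.mono inter_subset_left s hs)
  have hnhds : T ∩ Ioi 0 ∈ 𝓝 r := inter_mem hT (Ioi_mem_nhds hr)
  exact intervalIntegral.integral_hasDerivAt_right
    (intervalIntegrable_rpow_sub_one_mul hτ (hh.mono (by rwa [uIcc_of_le hr.le])))
    ((hcont.mono interior_subset).stronglyMeasurableAtFilter isOpen_interior r
      (mem_interior_iff_mem_nhds.2 hnhds)) (hcont.continuousAt hnhds)

end WeightedIntegral

lemma hasDerivAt_mul_rpow_neg_mul_rpow_inv {F : ℝ → ℝ} {F' r : ℝ} (C q θ : ℝ)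
    (hF : HasDerivAt F F' r) (hr : 0 < r) (hFr : 0 < F r) :
    HasDerivAt (fun x => C * x ^ (-q) * F x ^ (1 / θ))
      (C * r ^ (-q) * F r ^ (1 / θ) * (-q / r + F' / (θ * F r))) r := by
  refine (((hasDerivAt_rpow_const (p := -q) (Or.inl hr.ne')).const_mul C).mul
    (hF.rpow_const (p := 1 / θ) (Or.inl hFr.ne'))).congr_deriv ?_
  rw [rpow_sub_one hr.ne', rpow_sub_one hFr.ne']
  field_simp

lemma mul_rpow_neg_mul_rpow_inv_rpow {C r F : ℝ} (q : ℝ) {θ : ℝ} (hC : 0 < C) (hr : 0 < r)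
    (hF : 0 < F) (hθ : θ ≠ 0) :
    (C * r ^ (-q) * F ^ (1 / θ)) ^ θ = C ^ θ * r ^ (-(q * θ)) * F := by
  rw [mul_rpow (by positivity) (by positivity), mul_rpow hC.le (by positivity),
    ← rpow_mul hr.le, ← rpow_mul hF.le, one_div_mul_cancel hθ, Real.rpow_one, neg_mul]

lemma radial_ode_identity {C r F G : ℝ} (q τ : ℝ) {θ : ℝ} (hC : 0 < C) (hr : 0 < r)
    (hF : 0 < F) (hθ : θ ≠ 0) :
    C * r ^ (-q) * F ^ (1 / θ) * (-q / r + r ^ (τ - 1) * G / (θ * F)) *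
        (C * r ^ (-q) * F ^ (1 / θ)) ^ (θ - 1) + q / r * (C * r ^ (-q) * F ^ (1 / θ)) ^ θ =
      C ^ θ / θ * r ^ (τ - q * θ - 1) * G := by
  have hw : 0 < C * r ^ (-q) * F ^ (1 / θ) := by positivity
  have hr' : r ^ (τ - q * θ - 1) = r ^ (-(q * θ)) * r ^ (τ - 1) := by
    rw [← rpow_add hr]; ring_nf
  rw [rpow_sub_one hw.ne', mul_rpow_neg_mul_rpow_inv_rpow q hC hr hF hθ, hr']
  field_simp
  ring

theorem solution_satisfies_ODE_general
    (g : ℝ → ℝ) (hg_cont : Continuous g) (hg_pos : ∀ t, 0 < g t)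
    (C q θ τ a : ℝ) (hC : 0 < C) (hq : 0 ≤ q) (hθ : 0 < θ) (hτ : θ * q < τ)
    (R : ℝ≥0∞) (v : ℝ → ℝ)
    (hv : SolvesCauchy C q τ θ a g R v) :
    ∀ r : ℝ, 0 < r → ENNReal.ofReal r < R →
      0 < deriv v r ∧ DifferentiableAt ℝ (deriv v) r ∧
      deriv (deriv v) r * (deriv v r) ^ (θ - 1) + q / r * (deriv v r) ^ θ =
        C ^ θ / θ * r ^ (τ - q * θ - 1) * g (v r) := by
  intro r hr hrR
  obtain ⟨hv_cont, -, hv_deriv⟩ := hv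
  have hτ0 : 0 < τ := (mul_nonneg hθ.le hq).trans_lt hτ
  have hS : ∀ᶠ x in 𝓝 r, 0 < x ∧ ENNReal.ofReal x < R :=
    (eventually_gt_nhds hr).and (ENNReal.continuous_ofReal.continuousAt.eventually_lt
      continuousAt_const hrR)
  have hIcc : Icc 0 r ⊆ {x : ℝ | 0 ≤ x ∧ ENNReal.ofReal x < R} := fun x hx =>
    ⟨hx.1, (ENNReal.ofReal_le_ofReal hx.2).trans_lt hrR⟩
  have hgv := hg_cont.comp_continuousOn hv_cont
  have hF := hasDerivAt_integral_rpow_sub_one_mul hτ0 hr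
    (hS.mono fun x hx => ⟨hx.1.le, hx.2⟩) hIcc hgv
  have hFpos := integral_rpow_sub_one_mul_pos hτ0 hr (hgv.mono hIcc) fun s _ => hg_pos (v s)
  have hv' : deriv v =ᶠ[𝓝 r] cauchyRHS C q τ θ g v :=
    hS.mono fun x hx => (hv_deriv x hx.1 hx.2).deriv
  have hv'' := (hasDerivAt_mul_rpow_neg_mul_rpow_inv C q θ hF hr hFpos).congr_of_eventuallyEq hv'
  rw [hv'.eq_of_nhds, hv''.deriv]
  exact ⟨by unfold cauchyRHS; positivity, hv''.differentiableAt,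
    radial_ode_identity q τ hC hr hFpos hθ.ne'⟩

/-- Identity (3.1): every solution of (★) with `τ > θq` satisfies `v'(r) > 0` and the
ODE `v''(r)(v'(r))^{θ-1} + (q/r)(v'(r))^θ = (C^θ/θ) r^{τ-qθ-1} g(v(r))` on `(0, R)`. -/
theorem solution_satisfies_ODE
    (g : ℝ → ℝ) (hg_cont : Continuous g) (hg_mono : Monotone g) (hg_pos : ∀ t, 0 < g t)
    (C q θ τ a : ℝ) (hC : 0 < C) (hq : 0 ≤ q) (hθ : 0 < θ) (hτ : θ * q < τ)
    (R : ℝ≥0∞) (v : ℝ → ℝ)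
    (hv : SolvesCauchy C q τ θ a g R v) :
    ∀ r : ℝ, 0 < r → ENNReal.ofReal r < R →
      0 < deriv v r ∧ DifferentiableAt ℝ (deriv v) r ∧
      deriv (deriv v) r * (deriv v r) ^ (θ - 1) + q / r * (deriv v r) ^ θ =
        C ^ θ / θ * r ^ (τ - q * θ - 1) * g (v r) :=
  solution_satisfies_ODE_general g hg_cont hg_pos C q θ τ a hC hq hθ hτ R v hv
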